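/- There exist sets A and B of cardinality 8 and a set C of cardinality 11, together with a bijection f : A × C → B × C, such that f admits no S(C)-equivariant quotient bijection h : A → B. -/
import Mathlib

/-- The transformed bijection `f_{α,β,γ}(a,c) = (β × γ)(f(α⁻¹ a, γ⁻¹ c))`. -/
def transform {A B C : Type} (f : A × C ≃ B × C)
    (α : Equiv.Perm A) (β : Equiv.Perm B) (γ : Equiv.Perm C) : A × C ≃ B × C :=
  ((Equiv.prodCongr α γ).symm.trans f).trans (Equiv.prodCongr β γ)

/-- The transformed quotient `h_{α,β}(a) = β(h(α⁻¹ a))`. -/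
def transformQ {A B : Type} (h : A ≃ B) (α : Equiv.Perm A) (β : Equiv.Perm B) : A ≃ B :=
  (α.symm.trans h).trans β

/-- `h : A ≃ B` is a `Γ`-equivariant quotient of `f : A × C ≃ B × C`. -/
def IsEquivQuotient {C : Type} (Γ : Subgroup (Equiv.Perm C)) {A B : Type}
    (f : A × C ≃ B × C) (h : A ≃ B) : Prop :=
  ∀ (α : Equiv.Perm A) (β : Equiv.Perm B) (γ : Equiv.Perm C), γ ∈ Γ →
    transform f α β γ = f → transformQ h α β = h

/-- `Γ` is fully cancelling: every bijection `f : A × C ≃ B × C` has a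
`Γ`-equivariant quotient. -/
def FullyCancelling (C : Type) (Γ : Subgroup (Equiv.Perm C)) : Prop :=
  ∀ (A B : Type) (f : A × C ≃ B × C), ∃ h : A ≃ B, IsEquivQuotient Γ f h

/-- `Γ` is finitely cancelling: every bijection `f : A × C ≃ B × C` with `A`, `B`
finite has a `Γ`-equivariant quotient. -/
def FinitelyCancelling (C : Type) (Γ : Subgroup (Equiv.Perm C)) : Prop :=
  ∀ (A B : Type), Finite A → Finite B →
    ∀ (f : A × C ≃ B × C), ∃ h : A ≃ B, IsEquivQuotient Γ f h

set_option maxRecDepth 10000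

private def pa1 : Equiv.Perm (Fin 8) := ⟨![1, 0, 2, 4, 3, 5, 7, 6], ![1, 0, 2, 4, 3, 5, 7, 6], by decide, by decide⟩
private def pa2 : Equiv.Perm (Fin 8) := ⟨![1, 2, 0, 4, 5, 3, 6, 7], ![2, 0, 1, 5, 3, 4, 6, 7], by decide, by decide⟩
private def pb1 : Equiv.Perm (Fin 8) := ⟨![2, 3, 0, 1, 5, 4, 6, 7], ![2, 3, 0, 1, 5, 4, 6, 7], by decide, by decide⟩
private def pb2 : Equiv.Perm (Fin 8) := ⟨![3, 2, 5, 4, 0, 1, 6, 7], ![4, 5, 1, 0, 3, 2, 6, 7], by decide, by decide⟩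
private def pg1 : Equiv.Perm (Fin 11) := ⟨![1, 0, 2, 4, 3, 6, 5, 8, 7, 10, 9], ![1, 0, 2, 4, 3, 6, 5, 8, 7, 10, 9], by decide, by decide⟩
private def pg2 : Equiv.Perm (Fin 11) := ⟨![1, 2, 0, 3, 4, 5, 6, 7, 8, 9, 10], ![2, 0, 1, 3, 4, 5, 6, 7, 8, 9, 10], by decide, by decide⟩

private def FF : Fin 88 → Fin 88 := ![66, 0, 11, 1, 13, 2, 12, 3, 15, 4, 14, 23, 67, 34, 35, 22, 33, 24, 36, 26, 37, 25, 46, 57, 68, 44, 56, 45, 55, 47, 59, 48, 58, 77, 5, 17, 6, 16, 7, 19, 8, 18, 9, 21, 28, 78, 38, 39, 27, 40, 30, 41, 29, 42, 32, 49, 61, 79, 50, 60, 51, 63, 52, 62, 53, 65, 10, 43, 54, 69, 71, 73, 75, 80, 82, 84, 86, 20, 31, 64, 72, 70, 76, 74, 83, 81, 87, 85]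
private def FI : Fin 88 → Fin 88 := ![1, 3, 5, 7, 9, 34, 36, 38, 40, 42, 66, 2, 6, 4, 10, 8, 37, 35, 41, 39, 77, 43, 15, 11, 17, 21, 19, 48, 44, 52, 50, 78, 54, 16, 13, 14, 18, 20, 46, 47, 49, 51, 53, 67, 25, 27, 22, 29, 31, 55, 58, 60, 62, 64, 68, 28, 26, 23, 32, 30, 59, 56, 63, 61, 79, 65, 0, 12, 24, 69, 81, 70, 80, 71, 83, 72, 82, 33, 45, 57, 73, 85, 74, 84, 75, 87, 76, 86]

private def enc : Fin 8 × Fin 11 → Fin 88 := fun p => ⟨p.1.val * 11 + p.2.val, by omega⟩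
private def dec : Fin 88 → Fin 8 × Fin 11 := fun i => (⟨i.val / 11, by omega⟩, ⟨i.val % 11, by omega⟩)

private def fex : Fin 8 × Fin 11 ≃ Fin 8 × Fin 11 :=
  ⟨fun p => dec (FF (enc p)), fun p => dec (FI (enc p)), by decide, by decide⟩

theorem voight_example_eight_eleven :
    ∃ (A B C : Type), Nat.card A = 8 ∧ Nat.card B = 8 ∧ Nat.card C = 11 ∧
      ∃ f : A × C ≃ B × C, ∀ h : A ≃ B,
        ¬ IsEquivQuotient (⊤ : Subgroup (Equiv.Perm C)) f h := by
  refine ⟨Fin 8, Fin 8, Fin 11, by simp, by simp, by simp, fex, ?_⟩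
  intro h hQ
  have e1 := hQ pa1 pb1 pg1 (Subgroup.mem_top _) (by apply Equiv.ext; decide)
  have e2 := hQ pa2 pb2 pg2 (Subgroup.mem_top _) (by apply Equiv.ext; decide)
  have q1 : ∀ x : Fin 8, h (pa1 x) = pb1 (h x) := by
    intro x
    have := Equiv.ext_iff.mp e1 (pa1 x)
    simpa [transformQ] using this.symm
  have q2 : ∀ x : Fin 8, h (pa2 x) = pb2 (h x) := by
    intro x
    have := Equiv.ext_iff.mp e2 (pa2 x)
    simpa [transformQ] using this.symm
  set x0 : Fin 8 := h.symm 6 with hx0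
  have hb1 : pb1 (h x0) = h x0 := by
    rw [hx0, Equiv.apply_symm_apply]; decide
  have hb2 : pb2 (h x0) = h x0 := by
    rw [hx0, Equiv.apply_symm_apply]; decide
  have f1 : pa1 x0 = x0 := h.injective (by rw [q1, hb1])
  have f2 : pa2 x0 = x0 := h.injective (by rw [q2, hb2])
  have : ∀ x : Fin 8, ¬(pa1 x = x ∧ pa2 x = x) := by decide
  exact this x0 ⟨f1, f2⟩
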